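/- arXiv:2101.02208 — 3 statements merged into one kernel-verified Lean document; each statement's English description precedes it below -/
import Mathlib

section
/- Let g be the doubly twisted metric on Ω = I × U determined by a, b, g*. Define the covector field τ by τ_0 = −ab and τ_μ = 0, the scalar κ = (∂_t a)/b, and the covector fields α, β by α_0 = 0, α_μ = (∂_μ a)/a, β_0 = 0, β_μ = −(∂_μ b)/b. Then ∇_i τ_j = κ g_{ij} + α_i τ_j + τ_i β_j on Ω, and moreover Σ_{i,j} g^{ij} α_i τ_j = 0 and Σ_{i,j} g^{ij} β_i τ_j = 0; that is, τ is a doubly torqued vector field for g. -/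
open scoped BigOperators

/-- Partial derivative of `f : ℝ^m → ℝ` in the `i`-th coordinate direction. -/
noncomputable def pd {m : ℕ} (i : Fin m) (f : (Fin m → ℝ) → ℝ) (x : Fin m → ℝ) : ℝ :=
  fderiv ℝ f x (Pi.single i 1)

/-- Christoffel symbols `Γ^k_{ij}` of a matrix-valued field `g`. -/
noncomputable def Christoffel {m : ℕ} (g : (Fin m → ℝ) → Matrix (Fin m) (Fin m) ℝ)
    (k i j : Fin m) (x : Fin m → ℝ) : ℝ :=
  (1 / 2) * ∑ l, (g x)⁻¹ k l *
    (pd i (fun y => g y l j) x + pd j (fun y => g y l i) x - pd l (fun y => g y i j) x)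

/-- Covariant derivative `∇_i τ_j` of a covector field `τ`. -/
noncomputable def covDeriv {m : ℕ} (g : (Fin m → ℝ) → Matrix (Fin m) (Fin m) ℝ)
    (τ : (Fin m → ℝ) → Fin m → ℝ) (i j : Fin m) (x : Fin m → ℝ) : ℝ :=
  pd i (fun y => τ y j) x - ∑ k, Christoffel g k i j x * τ x k

/-- `g` is a metric on `Ω`: smooth, symmetric and invertible there. -/
def IsMetricOn {m : ℕ} (g : (Fin m → ℝ) → Matrix (Fin m) (Fin m) ℝ)
    (Ω : Set (Fin m → ℝ)) : Prop :=
  (∀ i j, ContDiffOn ℝ (⊤ : ℕ∞) (fun x => g x i j) Ω) ∧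
  (∀ x ∈ Ω, (g x).IsSymm) ∧ (∀ x ∈ Ω, IsUnit (g x).det)

/-- The doubly twisted metric `ds² = -b² dt² + a² g*_{μν} dq^μ dq^ν` on `ℝ^{1+n}`. -/
noncomputable def dtMetric {n : ℕ} (a b : (Fin (n + 1) → ℝ) → ℝ)
    (gs : (Fin n → ℝ) → Matrix (Fin n) (Fin n) ℝ)
    (x : Fin (n + 1) → ℝ) : Matrix (Fin (n + 1)) (Fin (n + 1)) ℝ :=
  Matrix.of fun i j =>
    Fin.cases (motive := fun _ => ℝ)
      (Fin.cases (motive := fun _ => ℝ) (-(b x) ^ 2) (fun _ => 0) j)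
      (fun μ => Fin.cases (motive := fun _ => ℝ) 0
        (fun ν => (a x) ^ 2 * gs (fun σ => x σ.succ) μ ν) j) i

/-- Covector field with only a time component. -/
noncomputable def covec0 {n : ℕ} (f : (Fin (n + 1) → ℝ) → ℝ)
    (x : Fin (n + 1) → ℝ) : Fin (n + 1) → ℝ :=
  fun i => Fin.cases (motive := fun _ => ℝ) (f x) (fun _ => 0) i

/-- Covector field with only spatial components. -/
noncomputable def covecS {n : ℕ} (v : (Fin (n + 1) → ℝ) → Fin n → ℝ)
    (x : Fin (n + 1) → ℝ) : Fin (n + 1) → ℝ :=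
  fun i => Fin.cases (motive := fun _ => ℝ) 0 (fun μ => v x μ) i

/- ### Auxiliary lemmas -/

/-- The "tail" projection as a continuous linear map. -/
noncomputable def tailCLM (n : ℕ) : (Fin (n+1) → ℝ) →L[ℝ] (Fin n → ℝ) :=
  ContinuousLinearMap.pi (fun σ => ContinuousLinearMap.proj σ.succ)

lemma tailCLM_single0 {n : ℕ} : tailCLM n (Pi.single (0 : Fin (n+1)) (1:ℝ)) = 0 := by
  funext σ
  simp [tailCLM, Pi.single_apply, (Fin.succ_ne_zero σ)]

lemma pd_mul {n : ℕ} (i : Fin (n+1)) (f g : (Fin (n+1) → ℝ) → ℝ) (x : Fin (n+1) → ℝ)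
    (hf : DifferentiableAt ℝ f x) (hg : DifferentiableAt ℝ g x) :
    pd i (fun y => f y * g y) x = pd i f x * g x + f x * pd i g x := by
  unfold pd; rw [fderiv_fun_mul hf hg]; simp; ring

lemma pd_neg {n : ℕ} (i : Fin (n+1)) (f : (Fin (n+1) → ℝ) → ℝ) (x : Fin (n+1) → ℝ) :
    pd i (fun y => -f y) x = -pd i f x := by
  unfold pd; rw [fderiv_fun_neg]; simp

lemma pd_zero_fun {n : ℕ} (i : Fin (n+1)) (x : Fin (n+1) → ℝ) :
    pd i (fun _ => (0:ℝ)) x = 0 := by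
  unfold pd; simp

lemma pd0_comp_tail {n : ℕ} (G : (Fin n → ℝ) → ℝ) (x : Fin (n+1) → ℝ)
    (hG : DifferentiableAt ℝ G (fun σ => x σ.succ)) :
    pd 0 (fun y => G (fun σ => y σ.succ)) x = 0 := by
  unfold pd
  have h : (fun y : Fin (n+1) → ℝ => G (fun σ => y σ.succ)) = G ∘ (tailCLM n) := rfl
  rw [h, fderiv_comp x hG (tailCLM n).differentiableAt]
  simp [(tailCLM n).fderiv, tailCLM_single0]

/-- `τ_0 = -ab`, `τ_μ = 0` is a doubly torqued vector for the doubly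
twisted metric, with `κ = ∂_t a / b`, `α_μ = ∂_μ a / a`, `β_μ = -∂_μ b / b`. -/
theorem dtMetric_doubly_torqued
    {n : ℕ} (I : Set ℝ) (hIopen : IsOpen I) (hIconn : I.OrdConnected)
    (U : Set (Fin n → ℝ)) (hUopen : IsOpen U) (hUconn : IsConnected U)
    (Ω : Set (Fin (n + 1) → ℝ))
    (hΩ : Ω = {x | x 0 ∈ I ∧ (fun σ => x σ.succ) ∈ U})
    (a b : (Fin (n + 1) → ℝ) → ℝ)
    (ha : ContDiffOn ℝ (⊤ : ℕ∞) a Ω) (hapos : ∀ x ∈ Ω, 0 < a x)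
    (hb : ContDiffOn ℝ (⊤ : ℕ∞) b Ω) (hbpos : ∀ x ∈ Ω, 0 < b x)
    (gs : (Fin n → ℝ) → Matrix (Fin n) (Fin n) ℝ)
    (hgs : ∀ μ ν, ContDiffOn ℝ (⊤ : ℕ∞) (fun q => gs q μ ν) U)
    (hgsSymm : ∀ q ∈ U, (gs q).IsSymm) (hgsPD : ∀ q ∈ U, (gs q).PosDef)
    (g : (Fin (n + 1) → ℝ) → Matrix (Fin (n + 1)) (Fin (n + 1)) ℝ)
    (hg : g = dtMetric a b gs)
    (τ : (Fin (n + 1) → ℝ) → Fin (n + 1) → ℝ)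
    (hτ : τ = covec0 (fun x => -(a x * b x)))
    (κ : (Fin (n + 1) → ℝ) → ℝ) (hκ : κ = fun x => pd 0 a x / b x)
    (α : (Fin (n + 1) → ℝ) → Fin (n + 1) → ℝ)
    (hα : α = covecS (fun x μ => pd μ.succ a x / a x))
    (β : (Fin (n + 1) → ℝ) → Fin (n + 1) → ℝ)
    (hβ : β = covecS (fun x μ => -(pd μ.succ b x) / b x)) :
    ∀ x ∈ Ω,
      (∀ i j : Fin (n + 1),
        covDeriv g τ i j x = κ x * g x i j + α x i * τ x j + τ x i * β x j) ∧
      (∑ i, ∑ j, (g x)⁻¹ i j * α x i * τ x j = 0) ∧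
      (∑ i, ∑ j, (g x)⁻¹ i j * β x i * τ x j = 0) := by
  subst hΩ hg hτ hκ hα hβ
  intro x hx
  obtain ⟨hxI, hxU⟩ := hx
  have hΩopen : IsOpen {x : Fin (n+1) → ℝ | x 0 ∈ I ∧ (fun σ => x σ.succ) ∈ U} :=
    (hIopen.preimage (continuous_apply 0)).inter
      (hUopen.preimage (continuous_pi fun σ => continuous_apply σ.succ))
  have hxΩ : x ∈ {x : Fin (n+1) → ℝ | x 0 ∈ I ∧ (fun σ => x σ.succ) ∈ U} := ⟨hxI, hxU⟩
  have da : DifferentiableAt ℝ a x :=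
    (ha.contDiffAt (hΩopen.mem_nhds hxΩ)).differentiableAt (by simp)
  have db : DifferentiableAt ℝ b x :=
    (hb.contDiffAt (hΩopen.mem_nhds hxΩ)).differentiableAt (by simp)
  have ha0 : a x ≠ 0 := (hapos x hxΩ).ne'
  have hb0 : b x ≠ 0 := (hbpos x hxΩ).ne'
  have dG : ∀ μ ν, DifferentiableAt ℝ (fun q => gs q μ ν) (fun σ => x σ.succ) :=
    fun μ ν => ((hgs μ ν).contDiffAt (hUopen.mem_nhds hxU)).differentiableAt (by simp)
  have dGE : ∀ μ ν, DifferentiableAt ℝ (fun y : Fin (n+1) → ℝ => gs (fun σ => y σ.succ) μ ν) x :=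
    fun μ ν => by have := (dG μ ν).comp x (tailCLM n).differentiableAt; exact this
  have hApd := hgsPD _ hxU
  have hAinv : gs (fun σ => x σ.succ) * (gs (fun σ => x σ.succ))⁻¹ = 1 :=
    Matrix.mul_nonsing_inv _ hApd.det_pos.ne'.isUnit
  -- explicit inverse of the metric at x
  have hinv : (dtMetric a b gs x)⁻¹ = Matrix.of fun i j =>
      Fin.cases (motive := fun _ => ℝ)
        (Fin.cases (motive := fun _ => ℝ) (-(b x)^2)⁻¹ (fun _ => 0) j)
        (fun μ => Fin.cases (motive := fun _ => ℝ) 0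
          (fun ν => ((a x)^2)⁻¹ * (gs (fun σ => x σ.succ))⁻¹ μ ν) j) i := by
    refine Matrix.inv_eq_right_inv ?_
    ext i j
    rw [Matrix.mul_apply, Fin.sum_univ_succ]
    refine Fin.cases ?_ (fun μ => ?_) i <;> refine Fin.cases ?_ (fun ν => ?_) j
    · simp only [dtMetric, Matrix.of_apply, Fin.cases_zero, Fin.cases_succ, zero_mul,
        mul_zero, Finset.sum_const_zero, add_zero, Matrix.one_apply_eq]
      exact mul_inv_cancel₀ (neg_ne_zero.mpr (pow_ne_zero 2 hb0))
    · simp [dtMetric, Matrix.one_apply, (Fin.succ_ne_zero ν).symm]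
    · simp [dtMetric, Matrix.one_apply, Fin.succ_ne_zero μ]
    · simp only [dtMetric, Matrix.of_apply, Fin.cases_zero, Fin.cases_succ, zero_mul,
        mul_zero, zero_add]
      have hterm : ∀ σ : Fin n, (a x)^2 * gs (fun σ => x σ.succ) μ σ *
          (((a x)^2)⁻¹ * (gs (fun σ => x σ.succ))⁻¹ σ ν)
          = gs (fun σ => x σ.succ) μ σ * (gs (fun σ => x σ.succ))⁻¹ σ ν := by
        intro σ; field_simp
      rw [Finset.sum_congr rfl (fun σ _ => hterm σ), ← Matrix.mul_apply, hAinv]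
      simp [Matrix.one_apply, Fin.succ_inj]
  -- entries of the inverse
  have hi00 : (dtMetric a b gs x)⁻¹ 0 0 = (-(b x)^2)⁻¹ := by rw [hinv]; rfl
  have hi0s : ∀ σ : Fin n, (dtMetric a b gs x)⁻¹ 0 σ.succ = 0 := by
    intro σ; rw [hinv]; rfl
  have his0 : ∀ σ : Fin n, (dtMetric a b gs x)⁻¹ σ.succ 0 = 0 := by
    intro σ; rw [hinv]; rfl
  -- the only relevant Christoffel symbols
  have hGam : ∀ i j : Fin (n+1), Christoffel (dtMetric a b gs) 0 i j x
      = (1/2) * ((-(b x)^2)⁻¹ * (pd i (fun y => dtMetric a b gs y 0 j) x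
          + pd j (fun y => dtMetric a b gs y 0 i) x
          - pd 0 (fun y => dtMetric a b gs y i j) x)) := by
    intro i j
    simp only [Christoffel]
    rw [Fin.sum_univ_succ]
    simp only [hi0s, zero_mul, Finset.sum_const_zero, add_zero, hi00]
  have hCov : ∀ i j : Fin (n+1),
      covDeriv (dtMetric a b gs) (covec0 fun x => -(a x * b x)) i j x
      = pd i (fun y => covec0 (fun x => -(a x * b x)) y j) x
        + (a x * b x) * Christoffel (dtMetric a b gs) 0 i j x := by
    intro i j
    simp only [covDeriv]
    rw [Fin.sum_univ_succ]
    simp only [covec0, Fin.cases_zero, Fin.cases_succ, mul_zero, Finset.sum_const_zero,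
      add_zero]
    ring
  -- derivative computations
  have hpd_b2 : ∀ i : Fin (n+1), pd i (fun y => -(b y)^2) x
      = -(pd i b x * b x + b x * pd i b x) := by
    intro i
    have h : (fun y => -(b y)^2) = (fun y => -(b y * b y)) := by funext y; ring
    rw [h, pd_neg, pd_mul i b b x db db]
  have hpd_tau : ∀ i : Fin (n+1), pd i (fun y => -(a y * b y)) x
      = -(pd i a x * b x + a x * pd i b x) := by
    intro i
    rw [pd_neg, pd_mul i a b x da db]
  have hpd_zero : ∀ i : Fin (n+1), pd i (fun _ : Fin (n+1) → ℝ => (0:ℝ)) x = 0 :=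
    fun i => pd_zero_fun i x
  have hpd_tail0 : ∀ μ ν : Fin n, pd 0 (fun y => gs (fun σ => y σ.succ) μ ν) x = 0 :=
    fun μ ν => pd0_comp_tail (fun q => gs q μ ν) x (dG μ ν)
  have hpd_gss : ∀ μ ν : Fin n, pd 0 (fun y => (a y)^2 * gs (fun σ => y σ.succ) μ ν) x
      = (pd 0 a x * a x + a x * pd 0 a x) * gs (fun σ => x σ.succ) μ ν := by
    intro μ ν
    have h : (fun y => (a y)^2 * gs (fun σ => y σ.succ) μ ν)
        = (fun y => (a y * a y) * gs (fun σ => y σ.succ) μ ν) := by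
      funext y; ring
    rw [h, pd_mul 0 (fun y => a y * a y) (fun y => gs (fun σ => y σ.succ) μ ν) x
      (da.mul da) (dGE μ ν), pd_mul 0 a a x da da, hpd_tail0 μ ν]
    ring
  refine ⟨fun i j => ?_, ?_, ?_⟩
  · rw [hCov i j, hGam i j]
    refine Fin.cases ?_ (fun μ => ?_) i <;> refine Fin.cases ?_ (fun ν => ?_) j
    · -- i = 0, j = 0
      rw [show (fun y => covec0 (fun x => -(a x * b x)) y 0) = (fun y => -(a y * b y))
          from rfl,
        show (fun y => dtMetric a b gs y 0 0) = (fun y => -(b y)^2) from rfl,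
        hpd_tau 0, hpd_b2 0]
      simp only [covec0, covecS, dtMetric, Matrix.of_apply, Fin.cases_zero]
      field_simp
      ring
    · -- i = 0, j = ν.succ
      rw [show (fun y => covec0 (fun x => -(a x * b x)) y ν.succ)
            = (fun _ : Fin (n+1) → ℝ => (0:ℝ)) from rfl,
        show (fun y => dtMetric a b gs y 0 ν.succ) = (fun _ : Fin (n+1) → ℝ => (0:ℝ))
          from rfl,
        show (fun y => dtMetric a b gs y 0 0) = (fun y => -(b y)^2) from rfl,
        hpd_zero, hpd_b2 ν.succ]
      simp only [covec0, covecS, dtMetric, Matrix.of_apply, Fin.cases_zero, Fin.cases_succ]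
      field_simp
      ring
    · -- i = μ.succ, j = 0
      rw [show (fun y => covec0 (fun x => -(a x * b x)) y 0) = (fun y => -(a y * b y))
          from rfl,
        show (fun y => dtMetric a b gs y 0 μ.succ) = (fun _ : Fin (n+1) → ℝ => (0:ℝ))
          from rfl,
        show (fun y => dtMetric a b gs y μ.succ 0) = (fun _ : Fin (n+1) → ℝ => (0:ℝ))
          from rfl,
        show (fun y => dtMetric a b gs y 0 0) = (fun y => -(b y)^2) from rfl,
        hpd_tau μ.succ, hpd_zero, hpd_b2 μ.succ]
      simp only [covec0, covecS, dtMetric, Matrix.of_apply, Fin.cases_zero, Fin.cases_succ]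
      field_simp
      ring
    · -- i = μ.succ, j = ν.succ
      rw [show (fun y => covec0 (fun x => -(a x * b x)) y ν.succ)
            = (fun _ : Fin (n+1) → ℝ => (0:ℝ)) from rfl,
        show (fun y => dtMetric a b gs y 0 ν.succ) = (fun _ : Fin (n+1) → ℝ => (0:ℝ))
          from rfl,
        show (fun y => dtMetric a b gs y 0 μ.succ) = (fun _ : Fin (n+1) → ℝ => (0:ℝ))
          from rfl,
        show (fun y => dtMetric a b gs y μ.succ ν.succ)
            = (fun y => (a y)^2 * gs (fun σ => y σ.succ) μ ν) from rfl,
        hpd_zero μ.succ, hpd_zero ν.succ, hpd_gss μ ν]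
      simp only [covec0, covecS, dtMetric, Matrix.of_apply, Fin.cases_zero, Fin.cases_succ]
      field_simp
      ring
  · rw [Fin.sum_univ_succ]
    simp only [covec0, covecS, Fin.cases_zero, Fin.cases_succ, zero_mul, mul_zero,
      Fin.sum_univ_succ, his0, add_zero, zero_add, Finset.sum_const_zero]
  · rw [Fin.sum_univ_succ]
    simp only [covec0, covecS, Fin.cases_zero, Fin.cases_succ, zero_mul, mul_zero,
      Fin.sum_univ_succ, his0, add_zero, zero_add, Finset.sum_const_zero]
end

section
/- Let g be a metric on an open set Ω ⊆ ℝ^m and let τ be a smooth covector field satisfying ∇_i τ_j = κ g_{ij} + α_i τ_j + τ_i β_j with Σ_{i,j} g^{ij} α_i τ_j = 0 and Σ_{i,j} g^{ij} β_i τ_j = 0. Let λ : Ω → ℝ be smooth and nowhere vanishing with Σ_{i,j} g^{ij} τ_i ∂_j λ = 0. Then the covector field λτ satisfies ∇_i (λτ)_j = (λκ) g_{ij} + (α_i + (∂_i λ)/λ)(λτ)_j + (λτ)_i β_j, and the orthogonality conditions Σ_{i,j} g^{ij} (α_i + (∂_i λ)/λ)(λτ)_j = 0 and Σ_{i,j}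 g^{ij} β_i (λτ)_j = 0 hold; that is, λτ is again a doubly torqued vector field for g. -/
open scoped BigOperators

/-- rescaling a doubly torqued vector by `λ` with `τ^j ∂_j λ = 0`
gives again a doubly torqued vector. -/
theorem doubly_torqued_rescaling
    {m : ℕ} (Ω : Set (Fin m → ℝ)) (hΩ : IsOpen Ω)
    (g : (Fin m → ℝ) → Matrix (Fin m) (Fin m) ℝ) (hg : IsMetricOn g Ω)
    (τ : (Fin m → ℝ) → Fin m → ℝ) (hτ : ∀ j, ContDiffOn ℝ (⊤ : ℕ∞) (fun x => τ x j) Ω)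
    (κ : (Fin m → ℝ) → ℝ) (hκ : ContDiffOn ℝ (⊤ : ℕ∞) κ Ω)
    (α β : (Fin m → ℝ) → Fin m → ℝ)
    (hα : ∀ j, ContDiffOn ℝ (⊤ : ℕ∞) (fun x => α x j) Ω)
    (hβ : ∀ j, ContDiffOn ℝ (⊤ : ℕ∞) (fun x => β x j) Ω)
    (heq : ∀ x ∈ Ω, ∀ i j : Fin m,
      covDeriv g τ i j x = κ x * g x i j + α x i * τ x j + τ x i * β x j)
    (hατ : ∀ x ∈ Ω, ∑ i, ∑ j, (g x)⁻¹ i j * α x i * τ x j = 0)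
    (hβτ : ∀ x ∈ Ω, ∑ i, ∑ j, (g x)⁻¹ i j * β x i * τ x j = 0)
    (lam : (Fin m → ℝ) → ℝ) (hlam : ContDiffOn ℝ (⊤ : ℕ∞) lam Ω)
    (hlamne : ∀ x ∈ Ω, lam x ≠ 0)
    (hlamτ : ∀ x ∈ Ω, ∑ i, ∑ j, (g x)⁻¹ i j * τ x i * pd j lam x = 0) :
    ∀ x ∈ Ω,
      (∀ i j : Fin m,
        covDeriv g (fun y k => lam y * τ y k) i j x =
          (lam x * κ x) * g x i j
          + (α x i + pd i lam x / lam x) * (lam x * τ x j)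
          + (lam x * τ x i) * β x j) ∧
      (∑ i, ∑ j, (g x)⁻¹ i j * (α x i + pd i lam x / lam x) * (lam x * τ x j) = 0) ∧
      (∑ i, ∑ j, (g x)⁻¹ i j * β x i * (lam x * τ x j) = 0) := by
  intro x hx
  have hne := hlamne x hx
  have hdl : DifferentiableAt ℝ lam x :=
    (hlam.contDiffAt (hΩ.mem_nhds hx)).differentiableAt (by simp)
  have hdτ : ∀ j, DifferentiableAt ℝ (fun y => τ y j) x := fun j =>
    ((hτ j).contDiffAt (hΩ.mem_nhds hx)).differentiableAt (by simp)
  have hpd : ∀ i j, pd i (fun y => lam y * τ y j) x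
      = pd i lam x * τ x j + lam x * pd i (fun y => τ y j) x := by
    intro i j
    unfold pd
    rw [fderiv_fun_mul hdl (hdτ j)]
    simp [smul_eq_mul]
    ring
  have hginv : ∀ i j, (g x)⁻¹ i j = (g x)⁻¹ j i := by
    intro i j
    have hs := hg.2.1 x hx
    have h : ((g x)⁻¹).transpose = (g x)⁻¹ := by
      rw [Matrix.transpose_nonsing_inv, hs.eq]
    calc (g x)⁻¹ i j = ((g x)⁻¹).transpose j i := rfl
      _ = (g x)⁻¹ j i := by rw [h]
  have key : ∑ i, ∑ j, (g x)⁻¹ i j * pd i lam x * τ x j = 0 := by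
    rw [Finset.sum_comm, ← hlamτ x hx]
    refine Finset.sum_congr rfl fun i _ => Finset.sum_congr rfl fun j _ => ?_
    rw [hginv j i]; ring
  refine ⟨?_, ?_, ?_⟩
  · intro i j
    have h := heq x hx i j
    unfold covDeriv at h ⊢
    rw [hpd i j]
    have hsum : ∑ k, Christoffel g k i j x * (lam x * τ x k)
        = lam x * ∑ k, Christoffel g k i j x * τ x k := by
      rw [Finset.mul_sum]; exact Finset.sum_congr rfl fun k _ => by ring
    rw [hsum]
    have hp : pd i (fun y => τ y j) x
        = κ x * g x i j + α x i * τ x j + τ x i * β x j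
          + ∑ k, Christoffel g k i j x * τ x k := by linarith
    rw [hp]
    field_simp
    ring
  · calc ∑ i, ∑ j, (g x)⁻¹ i j * (α x i + pd i lam x / lam x) * (lam x * τ x j)
        = lam x * ∑ i, ∑ j, (g x)⁻¹ i j * α x i * τ x j
          + ∑ i, ∑ j, (g x)⁻¹ i j * pd i lam x * τ x j := by
          rw [Finset.mul_sum, ← Finset.sum_add_distrib]
          refine Finset.sum_congr rfl fun i _ => ?_
          rw [Finset.mul_sum, ← Finset.sum_add_distrib]
          refine Finset.sum_congr rfl fun j _ => ?_
          field_simp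
      _ = 0 := by rw [hατ x hx, key]; ring
  · calc ∑ i, ∑ j, (g x)⁻¹ i j * β x i * (lam x * τ x j)
        = lam x * ∑ i, ∑ j, (g x)⁻¹ i j * β x i * τ x j := by
          rw [Finset.mul_sum]
          refine Finset.sum_congr rfl fun i _ => ?_
          rw [Finset.mul_sum]
          exact Finset.sum_congr rfl fun j _ => by ring
      _ = 0 := by rw [hβτ x hx]; ring
end

section
/- Let g be a metric on an open set Ω ⊆ ℝ^m, let τ be a smooth covector field satisfying ∇_i τ_j = κ g_{ij} + α_i τ_j + τ_i β_j with Σ_{i,j} g^{ij} α_i τ_j = 0 and Σ_{i,j} g^{ij} β_i τ_j = 0, and suppose β_i = ∂_i θ for a smooth θ : Ω → ℝ with Σ_{i,j} g^{ij} τ_i ∂_j θ = 0. Let ĝ = e^{2θ} g with covariant derivative ∇̂ built from the Christoffel symbols of ĝ, and let τ̂_i = e^{θ} τ_i. Then ∇̂_i τ̂_j = (e^{−θ} κ) ĝ_{ij} + α_i τ̂_j on Ω, and Σ_{i,j} ĝ^{ij} α_i τ̂_j = 0; that is, τ̂ is a torqued vector field for ĝ (the β-term is absent). -/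
open scoped BigOperators

private lemma pd_exp_mul {m : ℕ} (i : Fin m) (θ f : (Fin m → ℝ) → ℝ) (x : Fin m → ℝ)
    (hθ : DifferentiableAt ℝ θ x) (hf : DifferentiableAt ℝ f x) :
    pd i (fun y => Real.exp (θ y) * f y) x
      = Real.exp (θ x) * pd i θ x * f x + Real.exp (θ x) * pd i f x := by
  unfold pd
  rw [fderiv_fun_mul hθ.exp hf, fderiv_exp hθ]
  simp only [ContinuousLinearMap.add_apply, ContinuousLinearMap.smul_apply, smul_eq_mul]
  ring

/-- Prop. 3 of the paper: if `β = dθ` with `τ ⟂ dθ`, then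
`τ̂ = e^θ τ` is a torqued vector for `ĝ = e^{2θ} g` (the `β`-term is absent). -/
theorem conformal_to_twisted
    {m : ℕ} (Ω : Set (Fin m → ℝ)) (hΩ : IsOpen Ω)
    (g : (Fin m → ℝ) → Matrix (Fin m) (Fin m) ℝ) (hg : IsMetricOn g Ω)
    (τ : (Fin m → ℝ) → Fin m → ℝ) (hτ : ∀ j, ContDiffOn ℝ (⊤ : ℕ∞) (fun x => τ x j) Ω)
    (κ : (Fin m → ℝ) → ℝ) (hκ : ContDiffOn ℝ (⊤ : ℕ∞) κ Ω)
    (α β : (Fin m → ℝ) → Fin m → ℝ)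
    (hα : ∀ j, ContDiffOn ℝ (⊤ : ℕ∞) (fun x => α x j) Ω)
    (hβ : ∀ j, ContDiffOn ℝ (⊤ : ℕ∞) (fun x => β x j) Ω)
    (heq : ∀ x ∈ Ω, ∀ i j : Fin m,
      covDeriv g τ i j x = κ x * g x i j + α x i * τ x j + τ x i * β x j)
    (hατ : ∀ x ∈ Ω, ∑ i, ∑ j, (g x)⁻¹ i j * α x i * τ x j = 0)
    (hβτ : ∀ x ∈ Ω, ∑ i, ∑ j, (g x)⁻¹ i j * β x i * τ x j = 0)
    (θ : (Fin m → ℝ) → ℝ) (hθ : ContDiffOn ℝ (⊤ : ℕ∞) θ Ω)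
    (ghat : (Fin m → ℝ) → Matrix (Fin m) (Fin m) ℝ)
    (hghat : ∀ x, ghat x = Matrix.of fun i j => Real.exp (2 * θ x) * g x i j)
    (hβθ : ∀ x ∈ Ω, ∀ i : Fin m, β x i = pd i θ x)
    (hτθ : ∀ x ∈ Ω, ∑ i, ∑ j, (g x)⁻¹ i j * τ x i * pd j θ x = 0)
    (τh : (Fin m → ℝ) → Fin m → ℝ)
    (hτh : ∀ x i, τh x i = Real.exp (θ x) * τ x i) :
    ∀ x ∈ Ω,
      (∀ i j : Fin m,
        covDeriv ghat τh i j x =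
          (Real.exp (-(θ x)) * κ x) * ghat x i j + α x i * τh x j) ∧
      (∑ i, ∑ j, (ghat x)⁻¹ i j * α x i * τh x j = 0) := by
  intro x hx
  obtain ⟨hgsm, hgsymm, hgdet⟩ := hg
  have hmem := hΩ.mem_nhds hx
  have hθd : DifferentiableAt ℝ θ x := (hθ.contDiffAt hmem).differentiableAt (by simp)
  have hgd : ∀ a b, DifferentiableAt ℝ (fun y => g y a b) x := fun a b =>
    ((hgsm a b).contDiffAt hmem).differentiableAt (by simp)
  have hτd : ∀ j, DifferentiableAt ℝ (fun y => τ y j) x := fun j =>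
    ((hτ j).contDiffAt hmem).differentiableAt (by simp)
  have h2θd : DifferentiableAt ℝ (fun y => 2 * θ y) x := hθd.const_mul 2
  have hpd2θ : ∀ i, pd i (fun y => 2 * θ y) x = 2 * pd i θ x := by
    intro i; unfold pd; rw [fderiv_const_mul hθd]; simp
  have hpdghat : ∀ i a b, pd i (fun y => ghat y a b) x
      = Real.exp (2 * θ x) * (2 * pd i θ x * g x a b + pd i (fun y => g y a b) x) := by
    intro i a b
    have hfun : (fun y => ghat y a b) = fun y => Real.exp (2 * θ y) * g y a b := by
      funext y; rw [hghat]; rfl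
    rw [hfun, pd_exp_mul i _ _ x h2θd (hgd a b), hpd2θ]; ring
  have hghatx : ghat x = Real.exp (2 * θ x) • g x := by
    rw [hghat]; ext a b; simp [Matrix.smul_apply]
  have hinv : (ghat x)⁻¹ = Real.exp (-(2 * θ x)) • (g x)⁻¹ := by
    apply Matrix.inv_eq_right_inv
    rw [hghatx, Matrix.smul_mul, Matrix.mul_smul, smul_smul,
      Matrix.mul_nonsing_inv _ (hgdet x hx), ← Real.exp_add]
    simp
  have hinvmul : (g x)⁻¹ * g x = 1 := Matrix.nonsing_inv_mul _ (hgdet x hx)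
  have hdelta : ∀ a b, ∑ l, (g x)⁻¹ a l * g x l b = if a = b then 1 else 0 := by
    intro a b
    have h := congrFun (congrFun hinvmul a) b
    simpa [Matrix.mul_apply, Matrix.one_apply] using h
  have hτrep : ∀ b, ∑ k, ∑ l, (g x)⁻¹ k l * g x l b * τ x k = τ x b := by
    intro b
    have h1 : ∀ k, ∑ l, (g x)⁻¹ k l * g x l b * τ x k
        = (if k = b then (1:ℝ) else 0) * τ x k := by
      intro k; rw [← Finset.sum_mul, hdelta]
    rw [Finset.sum_congr rfl fun k _ => h1 k]
    simp
  have hChr : ∀ k i j, Christoffel ghat k i j x = Christoffel g k i j x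
      + ∑ l, (g x)⁻¹ k l *
        (pd i θ x * g x l j + pd j θ x * g x l i - pd l θ x * g x i j) := by
    intro k i j
    unfold Christoffel
    rw [hinv]
    have hterm : ∀ l, (Real.exp (-(2 * θ x)) • (g x)⁻¹) k l *
        (pd i (fun y => ghat y l j) x + pd j (fun y => ghat y l i) x
          - pd l (fun y => ghat y i j) x)
        = (g x)⁻¹ k l * (pd i (fun y => g y l j) x + pd j (fun y => g y l i) x
            - pd l (fun y => g y i j) x)
          + 2 * ((g x)⁻¹ k l *
            (pd i θ x * g x l j + pd j θ x * g x l i - pd l θ x * g x i j)) := by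
      intro l
      rw [hpdghat, hpdghat, hpdghat]
      simp only [Matrix.smul_apply, smul_eq_mul]
      rw [Real.exp_neg]
      field_simp
      ring
    rw [Finset.sum_congr rfl fun l _ => hterm l, Finset.sum_add_distrib, mul_add]
    congr 1
    rw [← Finset.mul_sum]
    ring
  have hsum : ∀ i j, ∑ k, Christoffel ghat k i j x * τ x k
      = (∑ k, Christoffel g k i j x * τ x k) + pd i θ x * τ x j + pd j θ x * τ x i := by
    intro i j
    simp only [hChr, add_mul, Finset.sum_add_distrib]
    have hmid : ∑ k, (∑ l, (g x)⁻¹ k l *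
          (pd i θ x * g x l j + pd j θ x * g x l i - pd l θ x * g x i j)) * τ x k
        = pd i θ x * τ x j + pd j θ x * τ x i := by
      have hstep : ∑ k, (∑ l, (g x)⁻¹ k l *
            (pd i θ x * g x l j + pd j θ x * g x l i - pd l θ x * g x i j)) * τ x k
          = pd i θ x * (∑ k, ∑ l, (g x)⁻¹ k l * g x l j * τ x k)
            + pd j θ x * (∑ k, ∑ l, (g x)⁻¹ k l * g x l i * τ x k)
            - g x i j * (∑ k, ∑ l, (g x)⁻¹ k l * τ x k * pd l θ x) := by
        simp only [Finset.sum_mul, Finset.mul_sum, ← Finset.sum_sub_distrib,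
          ← Finset.sum_add_distrib]
        exact Finset.sum_congr rfl fun k _ => Finset.sum_congr rfl fun l _ => by ring
      rw [hstep, hτrep, hτrep, hτθ x hx]
      ring
    rw [hmid]
    ring
  constructor
  · intro i j
    have hpdτh : pd i (fun y => τh y j) x
        = Real.exp (θ x) * pd i θ x * τ x j
          + Real.exp (θ x) * pd i (fun y => τ y j) x := by
      have hfun : (fun y => τh y j) = fun y => Real.exp (θ y) * τ y j :=
        funext fun y => hτh y j
      rw [hfun]; exact pd_exp_mul i _ _ x hθd (hτd j)
    have hΓτh : ∑ k, Christoffel ghat k i j x * τh x k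
        = Real.exp (θ x) * ∑ k, Christoffel ghat k i j x * τ x k := by
      rw [Finset.mul_sum]
      exact Finset.sum_congr rfl fun k _ => by rw [hτh]; ring
    have hcd := heq x hx i j
    rw [hβθ x hx j] at hcd
    unfold covDeriv at hcd ⊢
    rw [hpdτh, hΓτh, hsum i j, hghat, hτh]
    have he1 : Real.exp (-(θ x)) * Real.exp (2 * θ x) = Real.exp (θ x) := by
      rw [← Real.exp_add]; ring_nf
    simp only [Matrix.of_apply]
    linear_combination Real.exp (θ x) * hcd - κ x * g x i j * he1
  · rw [hinv]
    have hstep : ∑ i, ∑ j, (Real.exp (-(2 * θ x)) • (g x)⁻¹) i j * α x i * τh x j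
        = Real.exp (-(2 * θ x)) * Real.exp (θ x) *
          ∑ i, ∑ j, (g x)⁻¹ i j * α x i * τ x j := by
      simp only [Matrix.smul_apply, smul_eq_mul, Finset.mul_sum]
      exact Finset.sum_congr rfl fun i _ => Finset.sum_congr rfl fun j _ => by
        rw [hτh]; ring
    rw [hstep, hατ x hx]
    ring
end
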